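/- arXiv:1308.6227 — 2 statements merged into one kernel-verified Lean document; each statement's English description precedes it below -/
import Mathlib

section
/- Let φ̂_α : ℝⁿ → [0,∞) be measurable with φ̂_α(ξ) ≥ δ_α > 0 on [-π,π]ⁿ, for α in a directed set A. Set M_{j,α}(ξ) = φ̂_α(ξ+2πj)/φ̂_α(ξ) for ξ ∈ [-π,π]ⁿ, j ∈ ℤⁿ∖{0}, and assume: (R1) M_{j,α}(ξ) → 0 as α → ∞ for a.e. ξ ∈ [-π,π]ⁿ and each j ≠ 0; (R2) M_{j,α}(ξ) ≤ M_j with (M_j) ∈ ℓ¹(ℤⁿ∖{0}) independent of α. Define L̂_α(ξ) = (2π)^{-n/2} φ̂_α(ξ)/Σ_{j∈ℤⁿ} φ̂_α(ξ-2πj). Then (2π)^{n/2} L̂_α(ξ) → χ_{[-π,π]ⁿ}(ξ) as α → ∞, for almost every ξ ∈ ℝⁿ. -/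
/-!
Write `ξ = r + 2πj₀` with `r ∈ [-π,π]ⁿ` and put `a_α(k) = φ̂_α(r + 2πk)`. Reindexing the
periodization gives `(2π)^{n/2} L̂_α(ξ) = a_α(j₀) / Σₖ a_α(k)`. After dividing by
`a_α(0) = φ̂_α(r)`, (R2) dominates the ratios `a_α(k)/a_α(0)`, `k ≠ 0`, by a summable sequence
and (R1) sends them to `0`, so by dominated convergence for series the quotient tends to `1` if
`j₀ = 0` and to `0` otherwise. Off a null set `r` lies in the open cube, and then `j₀ = 0`
exactly when `ξ` is in the cube.
-/

open MeasureTheory Filter Real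

noncomputable section

def lat (n : ℕ) (j : Fin n → ℤ) : EuclideanSpace ℝ (Fin n) := WithLp.toLp 2 (fun i => (j i : ℝ))

def cube (n : ℕ) : Set (EuclideanSpace ℝ (Fin n)) := {ξ | ∀ i, |ξ i| ≤ π}

open Topology

section RatioDomination

variable {κ : Type*} {k₀ : κ} {M : κ → ℝ}

lemma summable_of_div_le {a : κ → ℝ} (ha : ∀ k, 0 ≤ a k) (h₀ : 0 < a k₀)
    (hM : Summable fun k : {k // k ≠ k₀} => M k) (hle : ∀ k, k ≠ k₀ → a k / a k₀ ≤ M k) :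
    Summable a := by
  rw [← (Set.finite_singleton k₀).summable_compl_iff]
  refine (hM.mul_right (a k₀)).of_nonneg_of_le (fun k => ha k) fun k => ?_
  exact (div_le_iff₀ h₀).1 (hle k k.2)

lemma Summable.tsum_eq_add_tsum_ne {a : κ → ℝ} (ha : Summable a) :
    ∑' k, a k = a k₀ + ∑' k : {k // k ≠ k₀}, a k := by
  rw [← ha.tsum_subtype_add_tsum_subtype_compl {k₀}, tsum_singleton]
  rfl

variable {ι : Type*} {l : Filter ι} {a : ι → κ → ℝ}

theorem tendsto_div_tsum_of_dominated_ratios (ha : ∀ i k, 0 ≤ a i k) (h₀ : ∀ i, 0 < a i k₀)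
    (hM : Summable fun k : {k // k ≠ k₀} => M k)
    (hle : ∀ i k, k ≠ k₀ → a i k / a i k₀ ≤ M k)
    (hlim : ∀ k, k ≠ k₀ → Tendsto (fun i => a i k / a i k₀) l (𝓝 0)) :
    Tendsto (fun i => a i k₀ / ∑' k, a i k) l (𝓝 1) := by
  have htail : Tendsto (fun i => ∑' k : {k // k ≠ k₀}, a i k / a i k₀) l (𝓝 0) := by
    simpa using tendsto_tsum_of_dominated_convergence hM (fun k => hlim k k.2)
      (Eventually.of_forall fun i k => by
        rw [Real.norm_of_nonneg (div_nonneg (ha i k) (h₀ i).le)]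
        exact hle i k k.2)
  have hlim1 := (tendsto_const_nhds (x := (1 : ℝ))).add htail |>.inv₀ (by norm_num)
  rw [add_zero, inv_one] at hlim1
  refine hlim1.congr fun i => ?_
  rw [(summable_of_div_le (ha i) (h₀ i) hM (hle i)).tsum_eq_add_tsum_ne, tsum_div_const,
    one_add_div (h₀ i).ne', inv_div]

theorem tendsto_div_tsum_of_ne (ha : ∀ i k, 0 ≤ a i k) (h₀ : ∀ i, 0 < a i k₀)
    (hM : Summable fun k : {k // k ≠ k₀} => M k)
    (hle : ∀ i k, k ≠ k₀ → a i k / a i k₀ ≤ M k) {k : κ}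
    (hlim : Tendsto (fun i => a i k / a i k₀) l (𝓝 0)) :
    Tendsto (fun i => a i k / ∑' k, a i k) l (𝓝 0) := by
  refine squeeze_zero (fun i => div_nonneg (ha i k) (tsum_nonneg (ha i))) (fun i => ?_) hlim
  exact div_le_div_of_nonneg_left (ha i k) (h₀ i)
    ((summable_of_div_le (ha i) (h₀ i) hM (hle i)).le_tsum k₀ fun k _ => ha i k)

end RatioDomination

section Lattice

variable {n : ℕ}

@[simp] lemma lat_apply (j : Fin n → ℤ) (i : Fin n) : lat n j i = j i := rfl

@[simp] lemma lat_zero : lat n 0 = 0 := by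
  ext i; simp

lemma lat_sub (j k : Fin n → ℤ) : lat n (j - k) = lat n j - lat n k := by
  ext i; simp

lemma tsum_add_lat_sub_lat (f : EuclideanSpace ℝ (Fin n) → ℝ) (c : ℝ)
    (r : EuclideanSpace ℝ (Fin n)) (j₀ : Fin n → ℤ) :
    ∑' j, f (r + c • lat n j₀ - c • lat n j) = ∑' k, f (r + c • lat n k) := by
  simp_rw [add_sub_assoc, ← smul_sub, ← lat_sub]
  exact (Equiv.subLeft j₀).tsum_eq fun k => f (r + c • lat n k)

lemma exists_sub_lat_mem_cube (ξ : EuclideanSpace ℝ (Fin n)) :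
    ∃ j, ξ - (2 * π) • lat n j ∈ cube n := by
  refine ⟨fun i => round (ξ i / (2 * π)), fun i => ?_⟩
  have h2π : (0 : ℝ) < 2 * π := by positivity
  have hround := abs_sub_round (ξ i / (2 * π))
  calc |(ξ - (2 * π) • lat n fun i => round (ξ i / (2 * π))) i|
      = 2 * π * |ξ i / (2 * π) - round (ξ i / (2 * π))| := by
        rw [← abs_of_pos h2π, ← abs_mul, abs_of_pos h2π]
        simp [mul_sub, mul_div_cancel₀ _ h2π.ne']
    _ ≤ π := by nlinarith

lemma add_lat_notMem_cube {r : EuclideanSpace ℝ (Fin n)} (hr : ∀ i, |r i| < π)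
    {j : Fin n → ℤ} (hj : j ≠ 0) : r + (2 * π) • lat n j ∉ cube n := by
  obtain ⟨i, hi⟩ := Function.ne_iff.mp hj
  intro hmem
  have hji : (1 : ℝ) ≤ |(j i : ℝ)| := by exact_mod_cast Int.one_le_abs hi
  have hsum : |r i + 2 * π * j i| ≤ π := by simpa using hmem i
  have := abs_sub_abs_le_abs_sub (2 * π * j i) (-r i)
  rw [abs_mul, abs_of_pos (by positivity : (0 : ℝ) < 2 * π), abs_neg, sub_neg_eq_add,
    add_comm] at this
  nlinarith [hr i, pi_pos]

lemma measurableSet_cube : MeasurableSet (cube n) := by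
  simp only [cube, Set.ofPred_forall]
  exact .iInter fun i => measurableSet_le (measurable_pi_apply i |>.comp
    (PiLp.continuous_ofLp 2 _).measurable).abs measurable_const

lemma volume_coord_eq (i : Fin n) (c : ℝ) :
    volume {ξ : EuclideanSpace ℝ (Fin n) | ξ i = c} = 0 := by
  have hpres :=
    (EuclideanSpace.volume_preserving_symm_measurableEquiv_toLp (Fin n)).measure_preimage
    ((measurableSet_singleton c).preimage (measurable_pi_apply i)).nullMeasurableSet
  rw [volume_pi] at hpres
  exact hpres.trans (Measure.pi_eval_preimage_null _ (measure_singleton c))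

lemma ae_abs_coord_ne (c : ℝ) : ∀ᵐ ξ : EuclideanSpace ℝ (Fin n) ∂volume, ∀ i, |ξ i| ≠ c := by
  refine ae_all_iff.2 fun i => measure_mono_null (fun ξ hξ => ?_)
    (measure_union_null (volume_coord_eq i c) (volume_coord_eq i (-c)))
  have hξ : |ξ i| = c := not_not.mp hξ
  rcases abs_choice (ξ i) with h | h
  · exact Or.inl (show ξ i = c by linarith)
  · exact Or.inr (show ξ i = -c by linarith)

theorem tendsto_div_tsum_sub_lat {ι : Type*} {l : Filter ι}
    {φ : ι → EuclideanSpace ℝ (Fin n) → ℝ} {r : EuclideanSpace ℝ (Fin n)}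
    {M : (Fin n → ℤ) → ℝ} (hnonneg : ∀ α ξ, 0 ≤ φ α ξ) (hint : ∀ i, |r i| < π)
    (hpos : ∀ α, 0 < φ α r)
    (hM : Summable fun j : {j : Fin n → ℤ // j ≠ 0} => M j)
    (hle : ∀ α j, j ≠ 0 → φ α (r + (2 * π) • lat n j) / φ α r ≤ M j)
    (hlim : ∀ j, j ≠ 0 → Tendsto (fun α => φ α (r + (2 * π) • lat n j) / φ α r) l (𝓝 0))
    (j₀ : Fin n → ℤ) :
    Tendsto (fun α => φ α (r + (2 * π) • lat n j₀) /
        ∑' j, φ α (r + (2 * π) • lat n j₀ - (2 * π) • lat n j)) l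
      (𝓝 ((cube n).indicator (fun _ => (1 : ℝ)) (r + (2 * π) • lat n j₀))) := by
  simp_rw [tsum_add_lat_sub_lat]
  set a : ι → (Fin n → ℤ) → ℝ := fun α k => φ α (r + (2 * π) • lat n k)
  show Tendsto (fun α => a α j₀ / ∑' k, a α k) l _
  have ha₀ : ∀ α, a α 0 = φ α r := by simp [a]
  have ha : ∀ α k, 0 ≤ a α k := fun α k => hnonneg α _
  have hpos₀ : ∀ α, 0 < a α 0 := fun α => (ha₀ α).symm ▸ hpos α
  have hle₀ : ∀ α k, k ≠ 0 → a α k / a α 0 ≤ M k := fun α k hk => by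
    rw [ha₀]; exact hle α k hk
  have hlim₀ : ∀ k, k ≠ 0 → Tendsto (fun α => a α k / a α 0) l (𝓝 0) := by
    simp only [ha₀]; exact hlim
  rcases eq_or_ne j₀ 0 with rfl | hj₀
  · have hr : r ∈ cube n := fun i => (hint i).le
    rw [lat_zero, smul_zero, add_zero, Set.indicator_of_mem hr]
    exact tendsto_div_tsum_of_dominated_ratios ha hpos₀ hM hle₀ hlim₀
  · rw [Set.indicator_of_notMem (add_lat_notMem_cube hint hj₀)]
    exact tendsto_div_tsum_of_ne ha hpos₀ hM hle₀ (hlim₀ j₀ hj₀)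

end Lattice

theorem stmt13_general (n : ℕ) (ι : Type*) [SemilatticeSup ι]
    (φ : ι → EuclideanSpace ℝ (Fin n) → ℝ)
    (hnonneg : ∀ α ξ, 0 ≤ φ α ξ)
    (hδ : ∀ α, ∃ δ : ℝ, 0 < δ ∧ ∀ ξ ∈ cube n, δ ≤ φ α ξ)
    (hR1 : ∀ j : Fin n → ℤ, j ≠ 0 →
      ∀ᵐ ξ ∂(volume.restrict (cube n)),
        Tendsto (fun α => φ α (ξ + (2 * π) • lat n j) / φ α ξ) atTop (nhds 0))
    (hR2 : ∃ M : (Fin n → ℤ) → ℝ,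
      Summable (fun j : {j : Fin n → ℤ // j ≠ 0} => M (j : Fin n → ℤ)) ∧
      ∀ α, ∀ j : Fin n → ℤ, j ≠ 0 → ∀ ξ ∈ cube n,
        φ α (ξ + (2 * π) • lat n j) / φ α ξ ≤ M j) :
    ∀ᵐ ξ : EuclideanSpace ℝ (Fin n) ∂volume,
      Tendsto (fun α => φ α ξ / ∑' j : Fin n → ℤ, φ α (ξ - (2 * π) • lat n j))
        atTop (nhds (Set.indicator (cube n) (fun _ => (1 : ℝ)) ξ)) := by
  obtain ⟨M, hM, hle⟩ := hR2
  have hpos : ∀ α, ∀ r ∈ cube n, 0 < φ α r := fun α r hr =>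
    let ⟨_, hδ₀, hδr⟩ := hδ α; hδ₀.trans_le (hδr r hr)
  let IsGood (r : EuclideanSpace ℝ (Fin n)) : Prop := r ∈ cube n → (∀ i, |r i| < π) ∧
    ∀ j, j ≠ 0 → Tendsto (fun α => φ α (r + (2 * π) • lat n j) / φ α r) atTop (𝓝 0)
  have hgood : ∀ᵐ r ∂volume, IsGood r := by
    have hR1' := (ae_restrict_iff' measurableSet_cube).1 <| ae_all_iff.2 fun j =>
      if hj : j = 0 then .of_forall fun _ (h : j ≠ 0) => (h hj).elim
      else (hR1 j hj).mono fun _ h _ => h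
    filter_upwards [ae_abs_coord_ne π, hR1'] with r hπ hlim hr
    exact ⟨fun i => (hr i).lt_of_ne (hπ i), hlim hr⟩
  have htranslate : ∀ᵐ ξ ∂volume, ∀ j₀, IsGood (ξ - (2 * π) • lat n j₀) :=
    ae_all_iff.2 fun j₀ =>
      (measurePreserving_sub_right volume ((2 * π) • lat n j₀)).quasiMeasurePreserving.ae hgood
  filter_upwards [htranslate] with ξ hξ
  obtain ⟨j₀, hr⟩ := exists_sub_lat_mem_cube ξ
  obtain ⟨hint, hlim⟩ := hξ j₀ hr
  generalize hr_def : ξ - (2 * π) • lat n j₀ = r at hr hint hlim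
  obtain rfl : ξ = r + (2 * π) • lat n j₀ := by rw [← hr_def, sub_add_cancel]
  exact tendsto_div_tsum_sub_lat hnonneg hint (fun α => hpos α r hr) hM
    (fun α j hj => hle α j hj r hr) hlim j₀

/-- For a regular family of cardinal interpolators, `(2π)^{n/2} L̂_α(ξ) =
φ̂_α(ξ)/Σ_j φ̂_α(ξ-2πj)` converges a.e. to the indicator of the cube `[-π,π]ⁿ`. -/
theorem stmt13 (n : ℕ) (ι : Type*) [SemilatticeSup ι] [Nonempty ι]
    (φ : ι → EuclideanSpace ℝ (Fin n) → ℝ)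
    (hmeas : ∀ α, Measurable (φ α))
    (hnonneg : ∀ α ξ, 0 ≤ φ α ξ)
    (hδ : ∀ α, ∃ δ : ℝ, 0 < δ ∧ ∀ ξ ∈ cube n, δ ≤ φ α ξ)
    (hR1 : ∀ j : Fin n → ℤ, j ≠ 0 →
      ∀ᵐ ξ ∂(volume.restrict (cube n)),
        Tendsto (fun α => φ α (ξ + (2 * π) • lat n j) / φ α ξ) atTop (nhds 0))
    (hR2 : ∃ M : (Fin n → ℤ) → ℝ,
      Summable (fun j : {j : Fin n → ℤ // j ≠ 0} => M (j : Fin n → ℤ)) ∧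
      ∀ α, ∀ j : Fin n → ℤ, j ≠ 0 → ∀ ξ ∈ cube n,
        φ α (ξ + (2 * π) • lat n j) / φ α ξ ≤ M j) :
    ∀ᵐ ξ : EuclideanSpace ℝ (Fin n) ∂volume,
      Tendsto (fun α => φ α ξ / ∑' j : Fin n → ℤ, φ α (ξ - (2 * π) • lat n j))
        atTop (nhds (Set.indicator (cube n) (fun _ => (1 : ℝ)) ξ)) :=
  stmt13_general n ι φ hnonneg hδ hR1 hR2

end
end

section
/- Fix α ∈ [1/2, ∞) and n ≥ 1. There is a constant C independent of c ≥ 1 such that for all j ∈ ℤⁿ∖{0} and ξ ∈ (-π,π)ⁿ, the quotient M_{j,c}(ξ) = (‖ξ‖/‖ξ+2πj‖)^{-α-n/2} K_{α+n/2}(c‖ξ+2πj‖)/K_{α+n/2}(c‖ξ‖) satisfies M_{j,c}(ξ) ≤ C (‖ξ‖/‖ξ+2πj‖)^{-α-(n-1)/2} e^{c(‖ξ‖ − ‖ξ+2πj‖)}, and hence M_{j,c}(ξ) → 0 as c → ∞ for each fixed such j and ξ. -/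
open Filter Real

noncomputable section

/-- The modified Bessel function of the second kind,
`K_β(r) = (1/2) ∫_ℝ e^{-r cosh t} e^{βt} dt`. -/
def besselK (β r : ℝ) : ℝ :=
  (1 / 2) * ∫ t : ℝ, Real.exp (-r * Real.cosh t) * Real.exp (β * t)

/-!
Substituting `u = sinh (t / 2)` in the even form `K_β(r) = ½ ∫ e^{-r cosh t} cosh (βt) dt` turns
`K_{1/2}(r)` into a Gaussian integral, so `K_{1/2}(r) = √(π/(2r)) e^{-r}`; as `K_β(r)` increases
with `|β|`, this is a lower bound for every `β ≥ 1/2`. In the other direction `cosh t ≥ 1 + t²/2`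
and completing the square give `K_β(r) ≤ √(π/(2r)) e^{β²/(2r) - r}`. With `r = c‖ξ‖` and
`R = c‖ξ + 2πj‖ ≥ π` the quotient of the two bounds is `√(r/R) e^{β²/(2π)} e^{r-R}`, which is the
estimate with `C = e^{β²/(2π)}`; it tends to `0` because `‖ξ‖ < ‖ξ + 2πj‖`.
-/

open MeasureTheory Set

lemma Real.cosh_eq_one_add_two_mul_sinh_half_sq (t : ℝ) : cosh t = 1 + 2 * sinh (t / 2) ^ 2 := by
  rw [← mul_div_cancel₀ t two_ne_zero, cosh_two_mul, cosh_sq]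
  ring_nf

lemma Real.one_add_sq_div_two_le_cosh (t : ℝ) : 1 + t ^ 2 / 2 ≤ cosh t := by
  have hsinh : (t / 2) ^ 2 ≤ sinh (t / 2) ^ 2 := by
    rw [← sq_abs (t / 2), ← sq_abs (sinh _), abs_sinh]
    gcongr
    exact self_le_sinh_iff.2 (abs_nonneg _)
  linarith [cosh_eq_one_add_two_mul_sinh_half_sq t]

lemma exp_neg_mul_cosh_mul_exp_le {r : ℝ} (hr : 0 < r) (β t : ℝ) :
    exp (-r * cosh t) * exp (β * t) ≤
      exp (β ^ 2 / (2 * r) - r) * exp (-(r / 2) * (t - β / r) ^ 2) := by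
  rw [← exp_add, ← exp_add, exp_le_exp]
  have hsq : β ^ 2 / (2 * r) - r + -(r / 2) * (t - β / r) ^ 2 = -r * (1 + t ^ 2 / 2) + β * t := by
    field_simp; ring
  rw [hsq]
  nlinarith [Real.one_add_sq_div_two_le_cosh t]

lemma integrable_gaussian_shift {r : ℝ} (hr : 0 < r) (a b : ℝ) :
    Integrable (fun t : ℝ => exp a * exp (-(r / 2) * (t - b) ^ 2)) :=
  ((integrable_exp_neg_mul_sq (half_pos hr)).comp_sub_right b).const_mul _

lemma integrable_exp_neg_mul_cosh_mul_exp {r : ℝ} (hr : 0 < r) (β : ℝ) :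
    Integrable (fun t : ℝ => exp (-r * cosh t) * exp (β * t)) := by
  refine (integrable_gaussian_shift hr (β ^ 2 / (2 * r) - r) (β / r)).mono'
    (Continuous.aestronglyMeasurable (by fun_prop)) ?_
  filter_upwards with t
  rw [norm_of_nonneg (by positivity)]
  exact exp_neg_mul_cosh_mul_exp_le hr β t

lemma besselK_nonneg (β r : ℝ) : 0 ≤ besselK β r :=
  mul_nonneg (by norm_num) (integral_nonneg fun _ => by positivity)

lemma besselK_le {r : ℝ} (hr : 0 < r) (β : ℝ) :
    besselK β r ≤ √(π / (2 * r)) * exp (β ^ 2 / (2 * r) - r) := by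
  have hgauss : ∫ t : ℝ, exp (β ^ 2 / (2 * r) - r) * exp (-(r / 2) * (t - β / r) ^ 2) =
      exp (β ^ 2 / (2 * r) - r) * (2 * √(π / (2 * r))) := by
    rw [integral_const_mul, integral_sub_right_eq_self (fun s => exp (-(r / 2) * s ^ 2)),
      integral_gaussian, show π / (r / 2) = 2 ^ 2 * (π / (2 * r)) by field_simp,
      sqrt_mul (by positivity), sqrt_sq zero_le_two]
  have hle := integral_mono (integrable_exp_neg_mul_cosh_mul_exp hr β)
    (integrable_gaussian_shift hr _ (β / r)) (exp_neg_mul_cosh_mul_exp_le hr β)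
  rw [hgauss] at hle
  unfold besselK
  linarith

lemma exp_neg_mul_cosh_mul_cosh_eq (r β : ℝ) :
    (fun t : ℝ => exp (-r * cosh t) * cosh (β * t)) = fun t =>
      (1 / 2) * (exp (-r * cosh t) * exp (β * t) + exp (-r * cosh t) * exp (-β * t)) := by
  funext t
  rw [cosh_eq (β * t), ← neg_mul]
  ring

lemma integrable_exp_neg_mul_cosh_mul_cosh {r : ℝ} (hr : 0 < r) (β : ℝ) :
    Integrable (fun t : ℝ => exp (-r * cosh t) * cosh (β * t)) := by
  rw [exp_neg_mul_cosh_mul_cosh_eq]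
  exact ((integrable_exp_neg_mul_cosh_mul_exp hr β).add
    (integrable_exp_neg_mul_cosh_mul_exp hr (-β))).const_mul _

lemma besselK_eq_integral_cosh {r : ℝ} (hr : 0 < r) (β : ℝ) :
    besselK β r = (1 / 2) * ∫ t : ℝ, exp (-r * cosh t) * cosh (β * t) := by
  have hneg : ∫ t : ℝ, exp (-r * cosh t) * exp (-β * t) =
      ∫ t : ℝ, exp (-r * cosh t) * exp (β * t) := by
    rw [← integral_neg_eq_self]
    simp only [cosh_neg, neg_mul, mul_neg, neg_neg]
  rw [exp_neg_mul_cosh_mul_cosh_eq, integral_const_mul,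
    integral_add (integrable_exp_neg_mul_cosh_mul_exp hr β)
      (integrable_exp_neg_mul_cosh_mul_exp hr (-β)), hneg, besselK]
  ring

lemma besselK_mono {r : ℝ} (hr : 0 < r) {β β' : ℝ} (h : |β| ≤ |β'|) :
    besselK β r ≤ besselK β' r := by
  rw [besselK_eq_integral_cosh hr, besselK_eq_integral_cosh hr]
  gcongr ?_ * ?_
  refine integral_mono (integrable_exp_neg_mul_cosh_mul_cosh hr β)
    (integrable_exp_neg_mul_cosh_mul_cosh hr β') fun t => ?_
  gcongr
  rw [cosh_le_cosh, abs_mul, abs_mul]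
  gcongr

lemma besselK_half {r : ℝ} (hr : 0 < r) : besselK (1 / 2) r = √(π / (2 * r)) * exp (-r) := by
  have hderiv (t : ℝ) : HasDerivAt (fun t => sinh (t / 2)) (cosh (t / 2) / 2) t := by
    simpa [div_eq_mul_inv] using ((hasDerivAt_id t).div_const 2).sinh
  have himage : (fun t => sinh (t / 2)) '' univ = univ := by
    rw [image_univ]
    exact (sinh_surjective.comp fun x => ⟨2 * x, by ring⟩).range_eq
  have hsub := integral_image_eq_integral_abs_deriv_smul MeasurableSet.univ
    (fun t _ => (hderiv t).hasDerivWithinAt)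
    (sinh_injective.comp fun _ _ h => by simpa using h).injOn
    fun u => exp (-r) * exp (-(2 * r) * u ^ 2)
  rw [himage, Measure.restrict_univ, integral_const_mul, integral_gaussian] at hsub
  rw [besselK_eq_integral_cosh hr, ← integral_const_mul, mul_comm, hsub]
  congr 1
  funext t
  rw [abs_of_pos (by positivity), smul_eq_mul, cosh_eq_one_add_two_mul_sinh_half_sq t, ← exp_add]
  ring_nf

lemma sqrt_mul_exp_neg_le_besselK {r : ℝ} (hr : 0 < r) {β : ℝ} (hβ : 1 / 2 ≤ β) :
    √(π / (2 * r)) * exp (-r) ≤ besselK β r := by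
  rw [← besselK_half hr]
  exact besselK_mono hr (by rw [abs_of_pos one_half_pos, abs_of_pos (by linarith)]; exact hβ)

lemma besselK_div_le {β r R : ℝ} (hβ : 1 / 2 ≤ β) (hr : 0 < r) (hR : 0 < R) :
    besselK β R / besselK β r ≤ √(r / R) * exp (β ^ 2 / (2 * R)) * exp (r - R) := by
  have hlower := sqrt_mul_exp_neg_le_besselK hr hβ
  rw [div_le_iff₀ (lt_of_lt_of_le (by positivity) hlower)]
  calc besselK β R ≤ √(π / (2 * R)) * exp (β ^ 2 / (2 * R) - R) := besselK_le hR β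
    _ = √(r / R) * exp (β ^ 2 / (2 * R)) * exp (r - R) * (√(π / (2 * r)) * exp (-r)) := by
      rw [show π / (2 * R) = r / R * (π / (2 * r)) by field_simp, sqrt_mul (by positivity),
        sub_eq_add_neg, exp_add, show -R = (r - R) + -r by ring, exp_add]
      ring
    _ ≤ _ := by gcongr

lemma rpow_mul_besselK_div_le {β ρ P c : ℝ} (hβ : 1 / 2 ≤ β) (hρ : 0 ≤ ρ) (hP : π ≤ P)
    (hc : 1 ≤ c) :
    (ρ / P) ^ (-β) * (besselK β (c * P) / besselK β (c * ρ)) ≤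
      exp (β ^ 2 / (2 * π)) * (ρ / P) ^ (-β + 1 / 2) * exp (c * (ρ - P)) := by
  -- at `ρ = 0` the left side vanishes because of the junk value `0 ^ (-β) = 0`
  rcases hρ.eq_or_lt with rfl | hρ
  · rw [zero_div, zero_rpow (by linarith), zero_mul]
    positivity
  have hP₀ : 0 < P := pi_pos.trans_le hP
  have hratio := besselK_div_le hβ (mul_pos (by linarith) hρ) (mul_pos (by linarith) hP₀)
  rw [mul_div_mul_left _ _ (by positivity), ← mul_sub] at hratio
  have hexp : exp (β ^ 2 / (2 * (c * P))) ≤ exp (β ^ 2 / (2 * π)) := by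
    gcongr
    nlinarith
  calc (ρ / P) ^ (-β) * (besselK β (c * P) / besselK β (c * ρ))
      ≤ (ρ / P) ^ (-β) * (√(ρ / P) * exp (β ^ 2 / (2 * π)) * exp (c * (ρ - P))) := by
        gcongr
        exact hratio.trans (by gcongr)
    _ = exp (β ^ 2 / (2 * π)) * (ρ / P) ^ (-β + 1 / 2) * exp (c * (ρ - P)) := by
      rw [sqrt_eq_rpow, rpow_add (by positivity)]
      ring

lemma tendsto_rpow_mul_besselK_div {β ρ P : ℝ} (hβ : 1 / 2 ≤ β) (hρ : 0 ≤ ρ) (hρP : ρ < P)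
    (hP : π ≤ P) :
    Tendsto (fun c => (ρ / P) ^ (-β) * (besselK β (c * P) / besselK β (c * ρ))) atTop (nhds 0) := by
  have hbound : Tendsto (fun c => exp (β ^ 2 / (2 * π)) * (ρ / P) ^ (-β + 1 / 2) *
      exp (c * (ρ - P))) atTop (nhds 0) := by
    simpa using (tendsto_exp_atBot.comp
      (tendsto_id.atTop_mul_const_of_neg (sub_neg.2 hρP))).const_mul _
  refine squeeze_zero' (Eventually.of_forall fun c => ?_)
    ((eventually_ge_atTop 1).mono fun c hc => rpow_mul_besselK_div_le hβ hρ hP hc) hbound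
  exact mul_nonneg (rpow_nonneg (div_nonneg hρ (by linarith [pi_pos])) _)
    (div_nonneg (besselK_nonneg _ _) (besselK_nonneg _ _))

lemma pi_lt_abs_add_two_pi_mul_intCast {x : ℝ} (hx : |x| < π) {k : ℤ} (hk : k ≠ 0) :
    π < |x + 2 * π * k| := by
  have hk' : (1 : ℝ) ≤ |(k : ℝ)| := by exact_mod_cast Int.one_le_abs hk
  have h2πk : 2 * π ≤ |2 * π * k| := by
    rw [abs_mul, abs_of_pos two_pi_pos]
    nlinarith [pi_pos]
  have := abs_sub_abs_le_abs_sub (2 * π * k) (-x)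
  rw [sub_neg_eq_add, add_comm, abs_neg] at this
  linarith

lemma add_two_pi_smul_lat_apply {n : ℕ} (ξ : EuclideanSpace ℝ (Fin n)) (j : Fin n → ℤ)
    (i : Fin n) : (ξ + (2 * π) • lat n j) i = ξ i + 2 * π * j i := by
  simp [lat]

section Lattice

variable {n : ℕ} {j : Fin n → ℤ} {ξ : EuclideanSpace ℝ (Fin n)}

lemma pi_lt_norm_add_two_pi_smul_lat (hj : j ≠ 0) (hξ : ∀ i, |ξ i| < π) :
    π < ‖ξ + (2 * π) • lat n j‖ := by
  obtain ⟨i, hi⟩ := Function.ne_iff.1 hj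
  calc π < |ξ i + 2 * π * j i| := pi_lt_abs_add_two_pi_mul_intCast (hξ i) hi
    _ = ‖(ξ + (2 * π) • lat n j) i‖ := by rw [add_two_pi_smul_lat_apply, norm_eq_abs]
    _ ≤ ‖ξ + (2 * π) • lat n j‖ := PiLp.norm_apply_le _ i

lemma norm_lt_norm_add_two_pi_smul_lat (hj : j ≠ 0) (hξ : ∀ i, |ξ i| < π) :
    ‖ξ‖ < ‖ξ + (2 * π) • lat n j‖ := by
  have hcoord (i : Fin n) (hi : j i ≠ 0) : ξ i ^ 2 < (ξ i + 2 * π * j i) ^ 2 := by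
    rw [← sq_abs, ← sq_abs (_ + _)]
    gcongr
    exact (hξ i).trans (pi_lt_abs_add_two_pi_mul_intCast (hξ i) hi)
  obtain ⟨i₀, hi₀⟩ := Function.ne_iff.1 hj
  rw [← sq_lt_sq₀ (norm_nonneg _) (norm_nonneg _), EuclideanSpace.real_norm_sq_eq,
    EuclideanSpace.real_norm_sq_eq]
  refine Finset.sum_lt_sum (fun i _ => ?_) ⟨i₀, Finset.mem_univ _, ?_⟩
  · rw [add_two_pi_smul_lat_apply]
    by_cases hi : j i = 0
    · simp [hi]
    · exact (hcoord i hi).le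
  · rw [add_two_pi_smul_lat_apply]
    exact hcoord i₀ hi₀

end Lattice

theorem stmt19_general (n : ℕ) (α : ℝ) (hα : 1 / 2 ≤ α) :
    ∃ C : ℝ, 0 < C ∧
      (∀ c : ℝ, 1 ≤ c → ∀ j : Fin n → ℤ, j ≠ 0 →
        ∀ ξ : EuclideanSpace ℝ (Fin n), (∀ i, |ξ i| < π) →
          (‖ξ‖ / ‖ξ + (2 * π) • lat n j‖) ^ (-α - (n : ℝ) / 2) *
              (besselK (α + (n : ℝ) / 2) (c * ‖ξ + (2 * π) • lat n j‖) /
                besselK (α + (n : ℝ) / 2) (c * ‖ξ‖)) ≤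
            C * (‖ξ‖ / ‖ξ + (2 * π) • lat n j‖) ^ (-α - ((n : ℝ) - 1) / 2) *
              Real.exp (c * (‖ξ‖ - ‖ξ + (2 * π) • lat n j‖))) ∧
      (∀ j : Fin n → ℤ, j ≠ 0 →
        ∀ ξ : EuclideanSpace ℝ (Fin n), (∀ i, |ξ i| < π) →
          Tendsto (fun c : ℝ =>
              (‖ξ‖ / ‖ξ + (2 * π) • lat n j‖) ^ (-α - (n : ℝ) / 2) *
                (besselK (α + (n : ℝ) / 2) (c * ‖ξ + (2 * π) • lat n j‖) /
                  besselK (α + (n : ℝ) / 2) (c * ‖ξ‖)))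
            atTop (nhds 0)) := by
  have hβ : 1 / 2 ≤ α + (n : ℝ) / 2 := by linarith [(n.cast_nonneg : (0 : ℝ) ≤ n)]
  rw [show -α - (n : ℝ) / 2 = -(α + n / 2) by ring,
    show -α - ((n : ℝ) - 1) / 2 = -(α + n / 2) + 1 / 2 by ring]
  refine ⟨exp ((α + n / 2) ^ 2 / (2 * π)), exp_pos _, fun c hc j hj ξ hξ => ?_,
    fun j hj ξ hξ => ?_⟩
  · exact rpow_mul_besselK_div_le hβ (norm_nonneg ξ)
      (pi_lt_norm_add_two_pi_smul_lat hj hξ).le hc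
  · exact tendsto_rpow_mul_besselK_div hβ (norm_nonneg ξ)
      (norm_lt_norm_add_two_pi_smul_lat hj hξ) (pi_lt_norm_add_two_pi_smul_lat hj hξ).le

/-- For the multivariate multiquadric family with fixed `α ≥ 1/2`: there is `C`
independent of `c ≥ 1` such that for `j ∈ ℤⁿ∖{0}` and `ξ ∈ (-π,π)ⁿ`,
`M_{j,c}(ξ) = (‖ξ‖/‖ξ+2πj‖)^{-α-n/2} K_{α+n/2}(c‖ξ+2πj‖)/K_{α+n/2}(c‖ξ‖)` satisfies
`M_{j,c}(ξ) ≤ C (‖ξ‖/‖ξ+2πj‖)^{-α-(n-1)/2} e^{c(‖ξ‖−‖ξ+2πj‖)}`, and hence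
`M_{j,c}(ξ) → 0` as `c → ∞`. -/
theorem stmt19 (n : ℕ) (hn : 1 ≤ n) (α : ℝ) (hα : 1 / 2 ≤ α) :
    ∃ C : ℝ, 0 < C ∧
      (∀ c : ℝ, 1 ≤ c → ∀ j : Fin n → ℤ, j ≠ 0 →
        ∀ ξ : EuclideanSpace ℝ (Fin n), (∀ i, |ξ i| < π) →
          (‖ξ‖ / ‖ξ + (2 * π) • lat n j‖) ^ (-α - (n : ℝ) / 2) *
              (besselK (α + (n : ℝ) / 2) (c * ‖ξ + (2 * π) • lat n j‖) /
                besselK (α + (n : ℝ) / 2) (c * ‖ξ‖)) ≤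
            C * (‖ξ‖ / ‖ξ + (2 * π) • lat n j‖) ^ (-α - ((n : ℝ) - 1) / 2) *
              Real.exp (c * (‖ξ‖ - ‖ξ + (2 * π) • lat n j‖))) ∧
      (∀ j : Fin n → ℤ, j ≠ 0 →
        ∀ ξ : EuclideanSpace ℝ (Fin n), (∀ i, |ξ i| < π) →
          Tendsto (fun c : ℝ =>
              (‖ξ‖ / ‖ξ + (2 * π) • lat n j‖) ^ (-α - (n : ℝ) / 2) *
                (besselK (α + (n : ℝ) / 2) (c * ‖ξ + (2 * π) • lat n j‖) /
                  besselK (α + (n : ℝ) / 2) (c * ‖ξ‖)))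
            atTop (nhds 0)) :=
  stmt19_general n α hα

end
end
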